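/- arXiv:1906.00540 — 3 statements merged into one kernel-verified Lean document; each statement's English description precedes it below -/
import Mathlib

section
/- Let σ, ν > 0 and a < 0 < b be real numbers. Fix p ∈ ℝ and define t = Π_{[-1,1]}(−p/ν) and r = Π_{[a,b]}(−(p + ν t)/σ). Then: if r > 0 then t = 1; if r < 0 then t = −1; and if r = 0 then t ∈ [−1,1]. In particular, t is a subgradient of the absolute value function at r, i.e. |s| − |r| ≥ t (s − r) for all s ∈ ℝ. -/
/-- With `t = Π_{[-1,1]}(-p/ν)` and `r = Π_{[a,b]}(-(p + ν t)/σ)`, the value `t`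
is a subgradient of the absolute value function at `r`. -/
theorem subgradient_projection_formula
    (σ ν a b p : ℝ) (hσ : 0 < σ) (hν : 0 < ν) (ha : a < 0) (hb : 0 < b)
    (t r : ℝ)
    (ht : t = min 1 (max (-1) (-p / ν)))
    (hr : r = min b (max a (-(p + ν * t) / σ))) :
    (0 < r → t = 1) ∧ (r < 0 → t = -1) ∧ (r = 0 → t ∈ Set.Icc (-1 : ℝ) 1) ∧
      (∀ s : ℝ, t * (s - r) ≤ |s| - |r|) := by
  have htmem : t ∈ Set.Icc (-1 : ℝ) 1 := by
    rw [ht]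
    exact ⟨le_min (by norm_num) (le_max_left _ _), min_le_left _ _⟩
  have hpos : 0 < r → t = 1 := by
    intro hrpos
    have hX : 0 < -(p + ν * t) / σ := by
      rcases le_or_gt (-(p + ν * t) / σ) a with h | h
      · have hm : max a (-(p + ν * t) / σ) = a := max_eq_left h
        rw [hr, hm] at hrpos
        linarith [lt_of_lt_of_le hrpos (min_le_right b a)]
      · have hle : r ≤ -(p + ν * t) / σ := by
          rw [hr]
          exact le_trans (min_le_right _ _) (le_of_eq (max_eq_right h.le))
        linarith
    have h1 : (0 : ℝ) * σ < -(p + ν * t) := (lt_div_iff₀ hσ).mp hX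
    have htlt : t < -p / ν := (lt_div_iff₀ hν).mpr (by nlinarith)
    have htm : t < max (-1) (-p / ν) := lt_of_lt_of_le htlt (le_max_right _ _)
    rcases min_cases (1 : ℝ) (max (-1) (-p / ν)) with ⟨h1, h2⟩ | ⟨h1, h2⟩
    · rw [ht, h1]
    · rw [ht] at htm; rw [h1] at htm; linarith
  have hneg : r < 0 → t = -1 := by
    intro hrneg
    have hX : -(p + ν * t) / σ < 0 := by
      rcases min_cases b (max a (-(p + ν * t) / σ)) with ⟨h1, h2⟩ | ⟨h1, h2⟩
      · rw [hr, h1] at hrneg; linarith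
      · rw [hr, h1] at hrneg
        exact lt_of_le_of_lt (le_max_right a _) hrneg
    have h1 : -(p + ν * t) < 0 * σ := (div_lt_iff₀ hσ).mp hX
    have htgt : -p / ν < t := (div_lt_iff₀ hν).mpr (by nlinarith)
    have hq : -p / ν < 1 := lt_of_lt_of_le htgt htmem.2
    rcases min_cases (1 : ℝ) (max (-1) (-p / ν)) with ⟨h1, h2⟩ | ⟨h1, h2⟩
    · exfalso
      rcases le_max_iff.mp h2 with h | h <;> linarith
    · rw [ht, h1]
      rcases max_cases (-1 : ℝ) (-p / ν) with ⟨g1, g2⟩ | ⟨g1, g2⟩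
      · exact g1
      · exfalso; rw [ht, h1, g1] at htgt; linarith
  refine ⟨hpos, hneg, fun _ => htmem, fun s => ?_⟩
  have hts : t * s ≤ |s| := by
    calc t * s ≤ |t * s| := le_abs_self _
      _ = |t| * |s| := abs_mul t s
      _ ≤ 1 * |s| :=
        mul_le_mul_of_nonneg_right (abs_le.mpr ⟨htmem.1, htmem.2⟩) (abs_nonneg s)
      _ = |s| := one_mul _
  have htr : t * r = |r| := by
    rcases lt_trichotomy r 0 with h | h | h
    · rw [hneg h, abs_of_neg h]; ring
    · rw [h, abs_zero]; ring
    · rw [hpos h, abs_of_pos h]; ring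
  have hexp : t * (s - r) = t * s - t * r := by ring
  linarith
end

section
/- Let σ, ν > 0 and a < 0 < b. For a real number p, define r(p) = Π_{[a,b]}(−(p + ν Π_{[-1,1]}(−p/ν))/σ). Then r(p) = 0 if and only if |p| ≤ ν (sparsity characterization). -/
/-- Sparsity characterization: the optimal control value
`r(p) = Π_{[a,b]}(-(p + ν Π_{[-1,1]}(-p/ν))/σ)` vanishes iff `|p| ≤ ν`. -/
theorem sparsity_characterization
    (σ ν a b : ℝ) (hσ : 0 < σ) (hν : 0 < ν) (ha : a < 0) (hb : 0 < b) (p : ℝ) :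
    min b (max a (-(p + ν * min 1 (max (-1) (-p / ν))) / σ)) = 0 ↔ |p| ≤ ν := by
  constructor
  · intro h
    by_contra hcon
    push_neg at hcon
    rw [lt_abs] at hcon
    rcases hcon with hp | hp
    · -- ν < p
      have h1 : -p / ν ≤ -1 := by rw [div_le_iff₀ hν]; linarith
      rw [max_eq_left h1, min_eq_right (by norm_num : (-1:ℝ) ≤ 1)] at h
      have hneg : -(p + ν * (-1)) / σ < 0 := by
        apply div_neg_of_neg_of_pos; · linarith
        · exact hσ
      have hm : max a (-(p + ν * (-1)) / σ) < 0 := max_lt ha hneg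
      rw [min_eq_right (by linarith)] at h
      linarith
    · -- ν < -p
      have h1 : (1:ℝ) ≤ -p / ν := by rw [le_div_iff₀ hν]; linarith
      rw [max_eq_right (by linarith : (-1:ℝ) ≤ -p / ν), min_eq_left h1] at h
      have hpos : 0 < -(p + ν * 1) / σ := by
        apply div_pos; · linarith
        · exact hσ
      rw [max_eq_right (by linarith : a ≤ -(p + ν * 1) / σ)] at h
      rcases le_or_gt b (-(p + ν * 1) / σ) with h2 | h2
      · rw [min_eq_left h2] at h; linarith
      · rw [min_eq_right (le_of_lt h2)] at h; linarith
  · intro h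
    rw [abs_le] at h
    have h1 : -p / ν ≤ 1 := by rw [div_le_iff₀ hν]; linarith
    have h2 : -1 ≤ -p / ν := by rw [le_div_iff₀ hν]; linarith
    rw [max_eq_right h2, min_eq_right h1]
    have : ν * (-p / ν) = -p := by field_simp
    rw [this]
    norm_num
    rw [max_eq_right (le_of_lt ha), min_eq_right (le_of_lt hb)]
end

section
/- Let H be a real Hilbert space, a : H × H → ℝ a continuous coercive symmetric bilinear form, and let L : H → H' be a bounded linear map (trace-type operator) into another Hilbert space H'. Suppose v̄, ṽ, p̄, p̃ ∈ H satisfy a(v̄ − ṽ, φ) = ⟨r̄ − r̃, L φ⟩ and a(φ, p̄ − p̃) = ⟨L(v̄ − ṽ), Lφ⟩ for all φ ∈ H, where r̄, r̃ ∈ H'. Then ⟨L(p̄ − p̃), r̃ − r̄⟩ = −‖L(v̄ − ṽ)‖²_{H'} ≤ 0. -/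
open scoped InnerProductSpace

/-- The mixed state/adjoint error term has a sign:
`⟨L(p̄ - p̃), r̃ - r̄⟩ = -‖L(v̄ - ṽ)‖² ≤ 0`. -/
theorem mixed_error_term_sign
    {H H' : Type*} [NormedAddCommGroup H] [InnerProductSpace ℝ H]
    [NormedAddCommGroup H'] [InnerProductSpace ℝ H']
    (a : H → H → ℝ)
    (ha_bilin : IsBoundedBilinearMap ℝ (fun q : H × H => a q.1 q.2))
    (ha_symm : ∀ x y, a x y = a y x)
    (ha_coer : ∃ c : ℝ, 0 < c ∧ ∀ x, c * ‖x‖ ^ 2 ≤ a x x)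
    (L : H →L[ℝ] H')
    (vbar vtil pbar ptil : H) (rbar rtil : H')
    (hstate : ∀ φ : H, a (vbar - vtil) φ = ⟪rbar - rtil, L φ⟫_ℝ)
    (hadj : ∀ φ : H, a φ (pbar - ptil) = ⟪L (vbar - vtil), L φ⟫_ℝ) :
    ⟪L (pbar - ptil), rtil - rbar⟫_ℝ = -‖L (vbar - vtil)‖ ^ 2 ∧
      ⟪L (pbar - ptil), rtil - rbar⟫_ℝ ≤ 0 := by
  have h1 : ⟪L (pbar - ptil), rtil - rbar⟫_ℝ = -⟪rbar - rtil, L (pbar - ptil)⟫_ℝ := by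
    rw [real_inner_comm]
    rw [show rtil - rbar = -(rbar - rtil) by abel, inner_neg_left]
  have h2 : ⟪rbar - rtil, L (pbar - ptil)⟫_ℝ = ‖L (vbar - vtil)‖ ^ 2 := by
    rw [← hstate, hadj (vbar - vtil), real_inner_self_eq_norm_sq]
  have heq : ⟪L (pbar - ptil), rtil - rbar⟫_ℝ = -‖L (vbar - vtil)‖ ^ 2 := by
    rw [h1, h2]
  exact ⟨heq, heq ▸ neg_nonpos.mpr (sq_nonneg _)⟩
end
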